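/- arXiv:math/0202251 — 6 statements merged into one kernel-verified Lean document; each statement's English description precedes it below -/
import Mathlib

section
/- Fix n ∈ ℕ and weights a : Fin n → ℤ, and let ℂˣ act on ℂⁿ = (Fin n → ℂ) diagonally by t • v = fun i => (t : ℂ) ^ (a i) * v i. For v ∈ ℂⁿ, the map t ↦ t • v has a limit along the filter 't → 0' on ℂˣ (the filter Filter.comap Units.val (𝓝[≠] (0 : ℂ))) if and only if v i = 0 for every index i with a i < 0; and in that case the limit equals the zero-weight projection fun i => if a i = 0 then v i else 0. Consequently the attracting set X⁺ = {v | the limit of t • v as t → 0 exists} equals the coordinate subspace V₊ ⊕ V₀ = {v | ∀ i, a i < 0 → v i = 0}, and the limit map π⁺ : X⁺ → V₀ is the restriction of the linear coordinate projection onto the zero-weight subspace. -/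
open Topology Filter

private lemma L_neBot : Filter.NeBot (Filter.comap (Units.val : ℂˣ → ℂ) (𝓝[≠] (0 : ℂ))) := by
  apply Filter.comap_neBot
  intro t ht
  have : Filter.NeBot (𝓝[≠] (0 : ℂ)) := inferInstance
  obtain ⟨z, hz, hz0⟩ := Filter.nonempty_of_mem (Filter.inter_mem ht self_mem_nhdsWithin)
  exact ⟨Units.mk0 z hz0, hz⟩

private lemma pos_tendsto (m : ℤ) (hm : 0 < m) :
    Filter.Tendsto (fun t : ℂˣ => (t : ℂ) ^ m)
      (Filter.comap (Units.val : ℂˣ → ℂ) (𝓝[≠] (0 : ℂ))) (𝓝 0) := by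
  have hval : Filter.Tendsto (Units.val : ℂˣ → ℂ)
      (Filter.comap (Units.val : ℂˣ → ℂ) (𝓝[≠] (0 : ℂ))) (𝓝 0) :=
    Filter.tendsto_comap.mono_right nhdsWithin_le_nhds
  have hk : m = (m.toNat : ℤ) := (Int.toNat_of_nonneg hm.le).symm
  have hpow : Filter.Tendsto (fun z : ℂ => z ^ m.toNat) (𝓝 0) (𝓝 0) := by
    have := (continuous_pow m.toNat).tendsto (0 : ℂ)
    rwa [zero_pow (by omega : m.toNat ≠ 0)] at this
  have heq : (fun t : ℂˣ => (t : ℂ) ^ m) = fun t : ℂˣ => (t : ℂ) ^ m.toNat := by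
    funext t
    rw [← zpow_natCast, ← hk]
  rw [heq]
  exact hpow.comp hval

/-- For the diagonal linear `ℂˣ`-action on `ℂⁿ` with integer weights `a`, the limit of
`t • v` as `t → 0` exists iff `v` vanishes in all negative-weight coordinates, in which case
the limit is the projection onto the zero-weight coordinates: `X⁺ = V₊ ⊕ V₀` and `π⁺` is the
linear projection onto `V₀`. -/
theorem attracting_set_linear_action (n : ℕ) (a : Fin n → ℤ) (v : Fin n → ℂ) :
    ((∃ l : Fin n → ℂ, Filter.Tendsto (fun t : ℂˣ => fun i => (t : ℂ) ^ (a i) * v i)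
        (Filter.comap Units.val (𝓝[≠] (0 : ℂ))) (𝓝 l)) ↔ (∀ i, a i < 0 → v i = 0)) ∧
    ((∀ i, a i < 0 → v i = 0) →
      Filter.Tendsto (fun t : ℂˣ => fun i => (t : ℂ) ^ (a i) * v i)
        (Filter.comap Units.val (𝓝[≠] (0 : ℂ)))
        (𝓝 (fun i => if a i = 0 then v i else 0))) := by
  set L := Filter.comap (Units.val : ℂˣ → ℂ) (𝓝[≠] (0 : ℂ)) with hL
  have hneBot : Filter.NeBot L := L_neBot
  have hback : (∀ i, a i < 0 → v i = 0) →
      Filter.Tendsto (fun t : ℂˣ => fun i => (t : ℂ) ^ (a i) * v i) L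
        (𝓝 (fun i => if a i = 0 then v i else 0)) := by
    intro hv
    rw [tendsto_pi_nhds]
    intro i
    rcases lt_trichotomy (a i) 0 with h | h | h
    · simpa [hv i h, h.ne] using (tendsto_const_nhds : Filter.Tendsto (fun _ : ℂˣ => (0:ℂ)) L _)
    · simp only [h, if_pos rfl, zpow_zero, one_mul]
      exact tendsto_const_nhds
    · have := (pos_tendsto (a i) h).mul_const (v i)
      simpa [h.ne'] using this
  refine ⟨⟨fun ⟨l, hl⟩ i hi => ?_, fun h => ⟨_, hback h⟩⟩, hback⟩
  have hli : Filter.Tendsto (fun t : ℂˣ => (t : ℂ) ^ (a i) * v i) L (𝓝 (l i)) :=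
    tendsto_pi_nhds.mp hl i
  have hneg : Filter.Tendsto (fun t : ℂˣ => (t : ℂ) ^ (-a i)) L (𝓝 0) :=
    pos_tendsto (-a i) (by omega)
  have hmul := hneg.mul hli
  rw [zero_mul] at hmul
  have heq : (fun t : ℂˣ => (t : ℂ) ^ (-a i) * ((t : ℂ) ^ (a i) * v i))
      = fun _ : ℂˣ => v i := by
    funext t
    rw [← mul_assoc, ← zpow_add₀ t.ne_zero]
    simp
  rw [heq] at hmul
  exact tendsto_nhds_unique tendsto_const_nhds hmul
end

section
/- Fix n ∈ ℕ and weights a : Fin n → ℤ, and let ℂˣ act on ℂⁿ = (Fin n → ℂ) diagonally by t • v = fun i => (t : ℂ) ^ (a i) * v i. For v ∈ ℂⁿ, the map t ↦ t • v has a limit along the filter 't → ∞' on ℂˣ (the filter Filter.comap Units.val (Bornology.cobounded ℂ)) if and only if v i = 0 for every index i with a i > 0; and in that case the limit equals the zero-weight projection fun i => if a i = 0 then v i else 0. Consequently the repelling set X⁻ = {v | the limit of t • v as t → ∞ exists} equals the coordinate subspace V₋ ⊕ V₀ = {v | ∀ i, a i > 0 → v i = 0}, and the limit map π⁻ : X⁻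 → V₀ is the restriction of the linear coordinate projection onto the zero-weight subspace. -/
open Topology Filter

theorem aux_neBot : (Filter.comap (Units.val : ℂˣ → ℂ) (Bornology.cobounded ℂ)).NeBot := by
  apply Filter.comap_neBot
  intro t ht
  have hb : Bornology.IsBounded tᶜ := by
    rw [Bornology.isBounded_def, compl_compl]; exact ht
  obtain ⟨C, hC⟩ := isBounded_iff_forall_norm_le.1 hb
  set x : ℂ := ((max C 0 + 1 : ℝ) : ℂ) with hx
  have hxnorm : ‖x‖ = max C 0 + 1 := by
    rw [hx, Complex.norm_real, Real.norm_eq_abs, abs_of_pos]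
    positivity
  have hx0 : x ≠ 0 := by
    intro h
    rw [h, norm_zero] at hxnorm
    nlinarith [le_max_right C (0:ℝ)]
  refine ⟨Units.mk0 x hx0, ?_⟩
  by_contra h
  have := hC x h
  rw [hxnorm] at this
  nlinarith [le_max_left C (0:ℝ)]

theorem aux_norm_atTop : Filter.Tendsto (fun t : ℂˣ => ‖(t : ℂ)‖)
    (Filter.comap (Units.val : ℂˣ → ℂ) (Bornology.cobounded ℂ)) Filter.atTop :=
  tendsto_norm_cobounded_atTop.comp tendsto_comap

/-- For the diagonal linear `ℂˣ`-action on `ℂⁿ` with integer weights `a`, the limit of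
`t • v` as `t → ∞` exists iff `v` vanishes in all positive-weight coordinates, in which case
the limit is the projection onto the zero-weight coordinates: `X⁻ = V₋ ⊕ V₀` and `π⁻` is the
linear projection onto `V₀`. -/
theorem repelling_set_linear_action (n : ℕ) (a : Fin n → ℤ) (v : Fin n → ℂ) :
    ((∃ l : Fin n → ℂ, Filter.Tendsto (fun t : ℂˣ => fun i => (t : ℂ) ^ (a i) * v i)
        (Filter.comap Units.val (Bornology.cobounded ℂ)) (𝓝 l)) ↔
      (∀ i, a i > 0 → v i = 0)) ∧
    ((∀ i, a i > 0 → v i = 0) →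
      Filter.Tendsto (fun t : ℂˣ => fun i => (t : ℂ) ^ (a i) * v i)
        (Filter.comap Units.val (Bornology.cobounded ℂ))
        (𝓝 (fun i => if a i = 0 then v i else 0))) := by
  have hne := aux_neBot
  have hnorm := aux_norm_atTop
  have hlim : (∀ i, a i > 0 → v i = 0) →
      Filter.Tendsto (fun t : ℂˣ => fun i => (t : ℂ) ^ (a i) * v i)
        (Filter.comap Units.val (Bornology.cobounded ℂ))
        (𝓝 (fun i => if a i = 0 then v i else 0)) := by
    intro h
    rw [tendsto_pi_nhds]
    intro i
    rcases lt_trichotomy (a i) 0 with h' | h' | h'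
    · rw [if_neg h'.ne]
      have hz : Filter.Tendsto (fun t : ℂˣ => (t : ℂ) ^ (a i))
          (Filter.comap Units.val (Bornology.cobounded ℂ)) (𝓝 0) := by
        rw [tendsto_zero_iff_norm_tendsto_zero]
        simp only [norm_zpow]
        exact (tendsto_zpow_atTop_zero h').comp hnorm
      simpa using hz.mul_const (v i)
    · simp only [h', if_pos rfl, zpow_zero, one_mul]
      exact tendsto_const_nhds
    · rw [h i h']
      simp only [mul_zero, ite_self]
      exact tendsto_const_nhds
  refine ⟨⟨fun ⟨l, hl⟩ i hi => ?_, fun h => ⟨_, hlim h⟩⟩, hlim⟩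
  by_contra hv
  have hi' : Filter.Tendsto (fun t : ℂˣ => (t : ℂ) ^ (a i) * v i)
      (Filter.comap Units.val (Bornology.cobounded ℂ)) (𝓝 (l i)) :=
    tendsto_pi_nhds.1 hl i
  have hnormlim := hi'.norm
  have hatTop : Filter.Tendsto (fun t : ℂˣ => ‖(t : ℂ) ^ (a i) * v i‖)
      (Filter.comap Units.val (Bornology.cobounded ℂ)) Filter.atTop := by
    have h1 : Filter.Tendsto (fun t : ℂˣ => ‖(t : ℂ)‖ ^ (a i).toNat)
        (Filter.comap Units.val (Bornology.cobounded ℂ)) Filter.atTop := by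
      apply (tendsto_pow_atTop ?_).comp hnorm
      omega
    have h2 := h1.atTop_mul_const (norm_pos_iff.2 hv)
    refine h2.congr fun t => ?_
    rw [norm_mul, norm_zpow, ← zpow_natCast]
    congr 2
    omega
  exact not_tendsto_nhds_of_tendsto_atTop hatTop _ hnormlim
end

section
/- Fix n ∈ ℕ and weights a : Fin n → ℤ, and let ℂˣ act on ℂⁿ = (Fin n → ℂ) diagonally by t • v = fun i => (t : ℂ) ^ (a i) * v i. Then for v ∈ ℂⁿ the following are equivalent: (1) the map t ↦ t • v has a limit both along the filter 't → 0' (Filter.comap Units.val (𝓝[≠] (0 : ℂ))) and along the filter 't → ∞' (Filter.comap Units.val (Bornology.cobounded ℂ)); (2) v is a fixed point of the action, i.e. t • v = v for all t ∈ ℂˣ. In other words, for the linear action the intersection of the attracting set and the repelling set equals the fixed-point set: X⁺ ∩ X⁻ = F. -/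
open Topology Filter

private noncomputable def useq (k : ℕ) : ℂˣ := Units.mk0 ((k : ℂ) + 1) (Nat.cast_add_one_ne_zero k)

private lemma useq_val (k : ℕ) : ((useq k : ℂˣ) : ℂ) = (k : ℂ) + 1 := rfl

private lemma useq_inv_val (k : ℕ) : (((useq k)⁻¹ : ℂˣ) : ℂ) = ((k : ℂ) + 1)⁻¹ := by
  rw [Units.val_inv_eq_inv_val, useq_val]

private lemma norm_nat_add_one (k : ℕ) : ‖((k : ℂ) + 1)‖ = (k : ℝ) + 1 := by
  rw [show ((k : ℂ) + 1) = ((((k : ℝ) + 1) : ℝ) : ℂ) by push_cast; ring,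
    Complex.norm_real]
  exact abs_of_nonneg (by positivity)

private lemma nat_add_one_atTop : Tendsto (fun k : ℕ => (k : ℝ) + 1) atTop atTop :=
  tendsto_natCast_atTop_atTop.atTop_add tendsto_const_nhds

private lemma contra_aux {F : Filter ℂˣ} {f : ℂˣ → ℂ} {l : ℂ} {u : ℕ → ℂˣ}
    (hf : Tendsto f F (𝓝 l)) (hu : Tendsto u atTop F)
    (hn : Tendsto (fun k => ‖f (u k)‖) atTop atTop) : False :=
  not_tendsto_atTop_of_tendsto_nhds ((hf.comp hu).norm) hn

private lemma useq_inv_tendsto :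
    Tendsto (fun k => (useq k)⁻¹) atTop (Filter.comap Units.val (𝓝[≠] (0 : ℂ))) := by
  rw [Filter.tendsto_comap_iff]
  have h1 : Tendsto (fun k : ℕ => ((k : ℂ) + 1)⁻¹) atTop (𝓝 0) := by
    have h0 : Tendsto (fun k : ℕ => ((k : ℝ) + 1)⁻¹) atTop (𝓝 0) :=
      tendsto_inv_atTop_zero.comp nat_add_one_atTop
    have h2 := (Complex.continuous_ofReal.tendsto 0).comp h0
    have : (fun k : ℕ => ((k : ℂ) + 1)⁻¹) = (Complex.ofReal ∘ fun k : ℕ => ((k : ℝ) + 1)⁻¹) := by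
      funext k; simp [Function.comp]
    rw [this]
    simpa using h2
  refine tendsto_nhdsWithin_of_tendsto_nhds_of_eventually_within _ ?_ ?_
  · have : (Units.val ∘ fun k => (useq k)⁻¹) = fun k : ℕ => ((k : ℂ) + 1)⁻¹ := by
      funext k; exact useq_inv_val k
    rw [this]; exact h1
  · filter_upwards with k
    simp only [Function.comp, useq_inv_val, Set.mem_compl_iff, Set.mem_singleton_iff]
    exact inv_ne_zero (Nat.cast_add_one_ne_zero k)

private lemma useq_tendsto :
    Tendsto useq atTop (Filter.comap Units.val (Bornology.cobounded ℂ)) := by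
  rw [Filter.tendsto_comap_iff, ← tendsto_norm_atTop_iff_cobounded]
  have : (fun k => ‖(Units.val ∘ useq) k‖) = fun k : ℕ => (k : ℝ) + 1 := by
    funext k; exact norm_nat_add_one k
  rw [this]
  exact nat_add_one_atTop

/-- For the diagonal linear `ℂˣ`-action on `ℂⁿ` with integer weights `a`, the map `t ↦ t • v`
has limits both as `t → 0` and as `t → ∞` iff `v` is a fixed point: `X⁺ ∩ X⁻ = F`. -/
theorem attracting_inter_repelling_eq_fixed (n : ℕ) (a : Fin n → ℤ) (v : Fin n → ℂ) :
    ((∃ l : Fin n → ℂ, Filter.Tendsto (fun t : ℂˣ => fun i => (t : ℂ) ^ (a i) * v i)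
        (Filter.comap Units.val (𝓝[≠] (0 : ℂ))) (𝓝 l)) ∧
     (∃ l : Fin n → ℂ, Filter.Tendsto (fun t : ℂˣ => fun i => (t : ℂ) ^ (a i) * v i)
        (Filter.comap Units.val (Bornology.cobounded ℂ)) (𝓝 l))) ↔
    (∀ t : ℂˣ, (fun i => (t : ℂ) ^ (a i) * v i) = v) := by
  constructor
  · rintro ⟨⟨l0, h0⟩, ⟨li, hi⟩⟩ t
    funext i
    rcases eq_or_ne (v i) 0 with hv | hv
    · simp [hv]
    have hvpos : 0 < ‖v i‖ := norm_pos_iff.2 hv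
    rcases lt_trichotomy (a i) 0 with ha | ha | ha
    · refine absurd rfl (fun _ : (0:ℕ) = 0 => ?_)
      refine contra_aux (tendsto_pi_nhds.1 h0 i) useq_inv_tendsto ?_
      have heq : ∀ k : ℕ, ‖(((useq k)⁻¹ : ℂˣ) : ℂ) ^ (a i) * v i‖
          = ((k : ℝ) + 1) ^ (-(a i)) * ‖v i‖ := by
        intro k
        rw [norm_mul, norm_zpow, useq_inv_val, norm_inv, norm_nat_add_one,
          inv_zpow, ← zpow_neg]
      simp only [heq]
      exact Tendsto.atTop_mul_const hvpos
        ((tendsto_zpow_atTop_atTop (by omega)).comp nat_add_one_atTop)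
    · simp [ha]
    · refine absurd rfl (fun _ : (0:ℕ) = 0 => ?_)
      refine contra_aux (tendsto_pi_nhds.1 hi i) useq_tendsto ?_
      have heq : ∀ k : ℕ, ‖((useq k : ℂˣ) : ℂ) ^ (a i) * v i‖
          = ((k : ℝ) + 1) ^ (a i) * ‖v i‖ := by
        intro k
        rw [norm_mul, norm_zpow, useq_val, norm_nat_add_one]
      simp only [heq]
      exact Tendsto.atTop_mul_const hvpos
        ((tendsto_zpow_atTop_atTop ha).comp nat_add_one_atTop)
  · intro h
    constructor <;> exact ⟨v, by simpa only [funext fun t => h t] using tendsto_const_nhds⟩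
end

section
/- Let X = {(x, y, z, w) : ℂ × ℂ × ℂ × ℂ | x * y = z * w} be the affine quadric cone, with the ℂˣ-action t • (x, y, z, w) = (t * x, t⁻¹ * y, z, w) on ℂ⁴. Then a point p = (x, y, z, w) ∈ X has a limit of t • p along the filter 't → 0' on ℂˣ (the filter Filter.comap Units.val (𝓝[≠] (0 : ℂ))) if and only if y = 0; consequently the attracting set X⁺ ∩ X = {(x, 0, z, w) | z * w = 0}, a union of two planes, and for such p the limit equals (0, 0, z, w). -/
open Topology Filter

/-- The `ℂˣ`-action `t • (x, y, z, w) = (t x, t⁻¹ y, z, w)` on `ℂ⁴`. -/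
def quadricAct (t : ℂˣ) (p : ℂ × ℂ × ℂ × ℂ) : ℂ × ℂ × ℂ × ℂ :=
  ((t : ℂ) * p.1, ((t⁻¹ : ℂˣ) : ℂ) * p.2.1, p.2.2.1, p.2.2.2)

lemma quadric_neBot : (Filter.comap (Units.val : ℂˣ → ℂ) (𝓝[≠] (0 : ℂ))).NeBot := by
  refine Filter.comap_neBot fun t ht => ?_
  obtain ⟨z, hzt, hz⟩ := Filter.nonempty_of_mem (Filter.inter_mem ht self_mem_nhdsWithin)
  exact ⟨Units.mk0 z hz, hzt⟩

lemma quadric_val_tendsto :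
    Filter.Tendsto (Units.val : ℂˣ → ℂ) (Filter.comap Units.val (𝓝[≠] (0 : ℂ))) (𝓝 0) :=
  tendsto_comap.mono_right nhdsWithin_le_nhds

lemma quadric_limit (p : ℂ × ℂ × ℂ × ℂ) (hy : p.2.1 = 0) :
    Filter.Tendsto (fun t : ℂˣ => quadricAct t p)
      (Filter.comap Units.val (𝓝[≠] (0 : ℂ))) (𝓝 (0, 0, p.2.2.1, p.2.2.2)) := by
  unfold quadricAct
  rw [hy]
  have h1 : Filter.Tendsto (fun t : ℂˣ => (t : ℂ) * p.1)
      (Filter.comap Units.val (𝓝[≠] (0 : ℂ))) (𝓝 0) := by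
    simpa using quadric_val_tendsto.mul_const p.1
  simpa using h1.prodMk_nhds
    ((tendsto_const_nhds (x := (0 : ℂ))).prodMk_nhds
      ((tendsto_const_nhds (x := p.2.2.1)).prodMk_nhds (tendsto_const_nhds (x := p.2.2.2))))

lemma quadric_main (p : ℂ × ℂ × ℂ × ℂ) :
    (∃ l : ℂ × ℂ × ℂ × ℂ, Filter.Tendsto (fun t : ℂˣ => quadricAct t p)
      (Filter.comap Units.val (𝓝[≠] (0 : ℂ))) (𝓝 l)) ↔ p.2.1 = 0 := by
  constructor
  · rintro ⟨l, hl⟩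
    have h2 : Filter.Tendsto (fun t : ℂˣ => ((t⁻¹ : ℂˣ) : ℂ) * p.2.1)
        (Filter.comap Units.val (𝓝[≠] (0 : ℂ))) (𝓝 l.2.1) :=
      ((continuous_fst.comp continuous_snd).tendsto l).comp hl
    have h3 : Filter.Tendsto (fun t : ℂˣ => (t : ℂ) * (((t⁻¹ : ℂˣ) : ℂ) * p.2.1))
        (Filter.comap Units.val (𝓝[≠] (0 : ℂ))) (𝓝 (0 * l.2.1)) :=
      quadric_val_tendsto.mul h2
    have h4 : (fun t : ℂˣ => (t : ℂ) * (((t⁻¹ : ℂˣ) : ℂ) * p.2.1)) = fun _ => p.2.1 := by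
      funext t
      rw [← mul_assoc, Units.mul_inv, one_mul]
    rw [h4, zero_mul] at h3
    have := quadric_neBot
    exact tendsto_nhds_unique (tendsto_const_nhds (x := p.2.1)) h3
  · intro hy
    exact ⟨_, quadric_limit p hy⟩

/-- For the quadric cone `X = {xy = zw}` with the action `t • (x,y,z,w) = (tx, t⁻¹y, z, w)`,
a point `p ∈ X` has a limit as `t → 0` iff `y = 0`, the limit being `(0, 0, z, w)`; the
attracting set `X⁺ ∩ X` is the union of two planes `{(x, 0, z, w) | zw = 0}`. -/
theorem quadric_cone_attracting_set :
    (∀ p : ℂ × ℂ × ℂ × ℂ, p.1 * p.2.1 = p.2.2.1 * p.2.2.2 →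
      (((∃ l : ℂ × ℂ × ℂ × ℂ, Filter.Tendsto (fun t : ℂˣ => quadricAct t p)
          (Filter.comap Units.val (𝓝[≠] (0 : ℂ))) (𝓝 l)) ↔ p.2.1 = 0) ∧
        (p.2.1 = 0 → Filter.Tendsto (fun t : ℂˣ => quadricAct t p)
          (Filter.comap Units.val (𝓝[≠] (0 : ℂ)))
          (𝓝 (0, 0, p.2.2.1, p.2.2.2))))) ∧
    {p : ℂ × ℂ × ℂ × ℂ | p.1 * p.2.1 = p.2.2.1 * p.2.2.2 ∧
        ∃ l : ℂ × ℂ × ℂ × ℂ, Filter.Tendsto (fun t : ℂˣ => quadricAct t p)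
          (Filter.comap Units.val (𝓝[≠] (0 : ℂ))) (𝓝 l)} =
      {q : ℂ × ℂ × ℂ × ℂ | ∃ x z w : ℂ, z * w = 0 ∧ q = (x, 0, z, w)} := by
  constructor
  · exact fun p _ => ⟨quadric_main p, quadric_limit p⟩
  · ext q
    simp only [Set.mem_setOf_eq]
    constructor
    · rintro ⟨hq, hl⟩
      have hy : q.2.1 = 0 := (quadric_main q).mp hl
      refine ⟨q.1, q.2.2.1, q.2.2.2, ?_, ?_⟩
      · rw [← hq, hy, mul_zero]
      · ext <;> simp [hy]
    · rintro ⟨x, z, w, hzw, rfl⟩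
      exact ⟨by simp [hzw], _, quadric_limit _ rfl⟩
end

section
/- Let X = {(x, y, z, w) : ℂ × ℂ × ℂ × ℂ | x * y = z * w} be the affine quadric cone, with the ℂˣ-action t • (x, y, z, w) = (t * x, t⁻¹ * y, z, w) on ℂ⁴. Then a point p = (x, y, z, w) ∈ X has a limit of t • p along the filter 't → ∞' on ℂˣ (the filter Filter.comap Units.val (Bornology.cobounded ℂ)) if and only if x = 0; consequently the repelling set X⁻ ∩ X = {(0, y, z, w) | z * w = 0}, a union of two planes, and for such p the limit equals (0, 0, z, w). -/
open Topology Filter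

open Bornology

namespace Units

instance comap_val_cobounded_neBot {G₀ : Type*} [GroupWithZero G₀] [Bornology G₀]
    [(cobounded G₀).NeBot] : (comap (Units.val : G₀ˣ → G₀) (cobounded G₀)).NeBot :=
  NeBot.comap_of_range_mem ‹_› <| mem_of_superset (isBounded_singleton (x := 0)).compl
    fun x hx ↦ ⟨Units.mk0 x hx, rfl⟩

variable {α : Type*} [NormedDivisionRing α]

theorem tendsto_val_mul_const_cobounded {a : α} (ha : a ≠ 0) :
    Tendsto (fun t : αˣ ↦ (t : α) * a) (comap Units.val (cobounded α)) (cobounded α) :=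
  (tendsto_mul_right_cobounded ha).comp tendsto_comap

theorem tendsto_val_inv_cobounded :
    Tendsto (fun t : αˣ ↦ ((t⁻¹ : αˣ) : α)) (comap Units.val (cobounded α)) (𝓝 0) := by
  simpa only [Units.val_inv_eq_inv_val, Function.comp_def] using
    tendsto_inv₀_cobounded.comp tendsto_comap

theorem not_tendsto_val_mul_const_nhds [(cobounded α).NeBot] {a : α} (ha : a ≠ 0) (b : α) :
    ¬Tendsto (fun t : αˣ ↦ (t : α) * a) (comap Units.val (cobounded α)) (𝓝 b) :=
  (tendsto_val_mul_const_cobounded ha).not_tendsto (Metric.disjoint_cobounded_nhds b)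

end Units

theorem tendsto_quadricAct_of_fst_eq_zero {p : ℂ × ℂ × ℂ × ℂ} (hp : p.1 = 0) :
    Tendsto (fun t : ℂˣ ↦ quadricAct t p) (comap Units.val (cobounded ℂ))
      (𝓝 (0, 0, p.2.2.1, p.2.2.2)) := by
  obtain ⟨x, y, z, w⟩ := p
  obtain rfl : x = 0 := hp
  simp only [quadricAct, mul_zero]
  refine tendsto_const_nhds.prodMk_nhds (.prodMk_nhds ?_ tendsto_const_nhds)
  simpa using Units.tendsto_val_inv_cobounded.mul_const y

theorem exists_tendsto_quadricAct_iff (p : ℂ × ℂ × ℂ × ℂ) :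
    (∃ l, Tendsto (fun t : ℂˣ ↦ quadricAct t p) (comap Units.val (cobounded ℂ)) (𝓝 l)) ↔
      p.1 = 0 := by
  refine ⟨fun ⟨l, hl⟩ ↦ ?_, fun hp ↦ ⟨_, tendsto_quadricAct_of_fst_eq_zero hp⟩⟩
  by_contra hp
  exact Units.not_tendsto_val_mul_const_nhds hp l.1 ((continuous_fst.tendsto l).comp hl)

/-- For the quadric cone `X = {xy = zw}` with the action `t • (x,y,z,w) = (tx, t⁻¹y, z, w)`,
a point `p ∈ X` has a limit as `t → ∞` iff `x = 0`, the limit being `(0, 0, z, w)`; the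
repelling set `X⁻ ∩ X` is the union of two planes `{(0, y, z, w) | zw = 0}`. -/
theorem quadric_cone_repelling_set :
    (∀ p : ℂ × ℂ × ℂ × ℂ, p.1 * p.2.1 = p.2.2.1 * p.2.2.2 →
      (((∃ l : ℂ × ℂ × ℂ × ℂ, Filter.Tendsto (fun t : ℂˣ => quadricAct t p)
          (Filter.comap Units.val (Bornology.cobounded ℂ)) (𝓝 l)) ↔ p.1 = 0) ∧
        (p.1 = 0 → Filter.Tendsto (fun t : ℂˣ => quadricAct t p)
          (Filter.comap Units.val (Bornology.cobounded ℂ))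
          (𝓝 (0, 0, p.2.2.1, p.2.2.2))))) ∧
    {p : ℂ × ℂ × ℂ × ℂ | p.1 * p.2.1 = p.2.2.1 * p.2.2.2 ∧
        ∃ l : ℂ × ℂ × ℂ × ℂ, Filter.Tendsto (fun t : ℂˣ => quadricAct t p)
          (Filter.comap Units.val (Bornology.cobounded ℂ)) (𝓝 l)} =
      {q : ℂ × ℂ × ℂ × ℂ | ∃ y z w : ℂ, z * w = 0 ∧ q = (0, y, z, w)} := by
  refine ⟨fun p _ ↦ ⟨exists_tendsto_quadricAct_iff p, tendsto_quadricAct_of_fst_eq_zero⟩, ?_⟩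
  ext ⟨x, y, z, w⟩
  simp only [Set.mem_ofPred_eq, exists_tendsto_quadricAct_iff, Prod.mk.injEq]
  constructor
  · rintro ⟨hcone, rfl⟩
    exact ⟨y, z, w, by rw [← hcone, zero_mul], rfl, rfl, rfl, rfl⟩
  · rintro ⟨y, z, w, hzw, rfl, rfl, rfl, rfl⟩
    exact ⟨by rw [hzw, zero_mul], rfl⟩
end

section
/- Fix p, q ∈ ℕ and let W = (Fin p → ℂ) × (Fin q → ℂ) × ℂ. Consider the projectivization ℙ ℂ W (Projectivization, with the quotient topology induced from the subspace {w : W | w ≠ 0}). Let b₊ : (Fin p → ℂ) → ℙ ℂ W be the map u ↦ Projectivization.mk (u, 0, 1) (well-defined since the last coordinate is 1 ≠ 0). Then the closure of the range of b₊ in ℙ ℂ W equals the set {Projectivization.mk (u, 0, c) | (u, c) ≠ (0, 0)}, i.e. the projectivization of the linear subspace (Fin p → ℂ) × {0} × ℂ of W. In particular this closure meets the complement of {Projectivization.mk (u, v, 0)} only in the range of b₊. -/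
/-!
A point `[u : 0 : c]` with `c ≠ 0` is `[c⁻¹ • u : 0 : 1]`, and `[u : 0 : 0]` is the limit of
`[u : 0 : t]` as `t → 0`, so the closure contains `ℙ(V₊ ⊕ 0 ⊕ k)`. Conversely `ℙ(V₊ ⊕ 0 ⊕ k)` is
closed: its preimage under the quotient map is the closed set of nonzero vectors with `v₋ = 0`.
-/

open scoped LinearAlgebra.Projectivization

/-- The quotient topology on the projectivization of a topological vector space. -/
instance projectivizationTopology (K V : Type*) [DivisionRing K] [AddCommGroup V]
    [Module K V] [TopologicalSpace V] : TopologicalSpace (ℙ K V) :=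
  inferInstanceAs (TopologicalSpace (Quotient (projectivizationSetoid K V)))

open Filter Topology

namespace Projectivization

section Submodule

variable {K V : Type*} [DivisionRing K] [AddCommGroup V] [Module K V]

theorem submodule_le_iff_exists_mem {x : ℙ K V} {S : Submodule K V} :
    x.submodule ≤ S ↔ ∃ (v : V) (hv : v ≠ 0), v ∈ S ∧ x = mk K v hv := by
  constructor
  · intro hx
    refine ⟨x.rep, x.rep_nonzero, ?_, x.mk_rep.symm⟩
    rwa [submodule_eq, Submodule.span_singleton_le_iff_mem] at hx
  · rintro ⟨v, hv, hvS, rfl⟩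
    rwa [submodule_mk, Submodule.span_singleton_le_iff_mem]

variable [TopologicalSpace V]

theorem isQuotientMap_mk' : IsQuotientMap (mk' K : {v : V // v ≠ 0} → ℙ K V) :=
  isQuotientMap_quotient_mk'

theorem _root_.Filter.Tendsto.projectivization_mk {α : Type*} {l : Filter α} {f : α → V}
    (hf : ∀ a, f a ≠ 0) {v : V} (hv : v ≠ 0) (h : Tendsto f l (𝓝 v)) :
    Tendsto (fun a => mk K (f a) (hf a)) l (𝓝 (mk K v hv)) :=
  (isQuotientMap_mk'.continuous.tendsto ⟨v, hv⟩).comp (tendsto_subtype_rng.mpr h)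

theorem isClosed_setOf_submodule_le {S : Submodule K V} (hS : IsClosed (S : Set V)) :
    IsClosed {x : ℙ K V | x.submodule ≤ S} := by
  rw [← isQuotientMap_mk'.isClosed_preimage]
  convert hS.preimage continuous_subtype_val using 1
  ext ⟨v, hv⟩
  simp [mk'_eq_mk, submodule_mk, Submodule.span_singleton_le_iff_mem]

end Submodule

section AffineChart

variable {K E F : Type*} [Field K] [AddCommGroup E] [Module K E] [AddCommGroup F] [Module K F]

variable (K F) in
def embedAffine (u : E) : ℙ K (E × F × K) :=
  mk K (u, 0, 1) fun h => one_ne_zero (congrArg (fun w : E × F × K => w.2.2) h)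

theorem embedAffine_inv_smul {u : E} {c : K} (hc : c ≠ 0) (h : ((u, 0, c) : E × F × K) ≠ 0) :
    embedAffine K F (c⁻¹ • u) = mk K (u, 0, c) h := by
  refine (mk_eq_mk_iff' K _ _ _ h).mpr ⟨c⁻¹, ?_⟩
  simp [inv_mul_cancel₀ hc]

variable [TopologicalSpace K] [TopologicalSpace E] [TopologicalSpace F]

theorem mk_mem_closure_range_embedAffine [(𝓝[≠] (0 : K)).NeBot] (u : E) (c : K)
    (h : ((u, 0, c) : E × F × K) ≠ 0) :
    mk K (u, 0, c) h ∈ closure (Set.range (embedAffine K F)) := by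
  rcases eq_or_ne c 0 with rfl | hc
  · have hu : ∀ t : K, ((u, 0, t) : E × F × K) ≠ 0 := fun t ht =>
      h (by simpa using congrArg Prod.fst ht)
    have hlim : Tendsto (fun t : K => mk K (u, 0, t) (hu t)) (𝓝[≠] 0) (𝓝 (mk K (u, 0, 0) h)) :=
      .projectivization_mk hu h ((Continuous.tendsto (by fun_prop) 0).mono_left nhdsWithin_le_nhds)
    refine mem_closure_of_tendsto hlim (eventually_nhdsWithin_of_forall fun t ht => ?_)
    exact ⟨t⁻¹ • u, embedAffine_inv_smul ht (hu t)⟩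
  · exact subset_closure ⟨c⁻¹ • u, embedAffine_inv_smul hc h⟩

theorem isClosed_setOf_mk_prod_zero [T1Space F] :
    IsClosed {x : ℙ K (E × F × K) | ∃ (u : E) (c : K) (h : ((u, 0, c) : E × F × K) ≠ 0),
      x = mk K (u, 0, c) h} := by
  let S : Submodule K (E × F × K) := (⊤ : Submodule K E).prod ((⊥ : Submodule K F).prod ⊤)
  have hS : IsClosed (S : Set (E × F × K)) := by
    simpa [S, Submodule.prod_coe] using isClosed_univ.prod (isClosed_singleton.prod isClosed_univ)
  convert isClosed_setOf_submodule_le hS using 1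
  ext x
  simp only [submodule_le_iff_exists_mem, S, Submodule.mem_prod, Submodule.mem_top,
    Submodule.mem_bot, true_and, and_true]
  constructor
  · rintro ⟨u, c, h, rfl⟩
    exact ⟨_, h, rfl, rfl⟩
  · rintro ⟨⟨u, _, c⟩, h, rfl, rfl⟩
    exact ⟨u, c, h, rfl⟩

end AffineChart

end Projectivization

open Projectivization

/-- In `ℙ(V₊ ⊕ V₋ ⊕ k)`, the closure of the image of `V₊` under the embedding
`u ↦ [u : 0 : 1]` is the projectivization `ℙ(V₊ ⊕ k)` of the subspace `V₊ ⊕ 0 ⊕ k`. -/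
theorem closure_embedding_plus (p q : ℕ) :
    closure (Set.range (fun u : Fin p → ℂ =>
        Projectivization.mk ℂ ((u, 0, 1) : (Fin p → ℂ) × (Fin q → ℂ) × ℂ)
          (fun h => one_ne_zero (congrArg (fun w : (Fin p → ℂ) × (Fin q → ℂ) × ℂ => w.2.2) h)))) =
      {x : ℙ ℂ ((Fin p → ℂ) × (Fin q → ℂ) × ℂ) |
        ∃ (u : Fin p → ℂ) (c : ℂ) (h : ((u, 0, c) : (Fin p → ℂ) × (Fin q → ℂ) × ℂ) ≠ 0),
          x = Projectivization.mk ℂ (u, 0, c) h} := by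
  refine (closure_minimal ?_ isClosed_setOf_mk_prod_zero).antisymm ?_
  · rintro _ ⟨u, rfl⟩
    exact ⟨u, 1, _, rfl⟩
  · rintro _ ⟨u, c, h, rfl⟩
    exact mk_mem_closure_range_embedAffine u c h
end
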